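/- arXiv:1506.03054 — 5 statements merged into one kernel-verified Lean document; each statement's English description precedes it below -/
import Mathlib

section
/- Let a ≥ 0 and let f : [0,1) → ℝ be a differentiable function with f(t) > 0 for all t, satisfying f'(t) ≥ (1/(1−t))·(f(t) − a²/f(t)) for all t ∈ [0,1), and with f(0) ≥ a. Then for all t ∈ [0,1), f(t)² − a² ≥ (1−t)⁻²·(f(0)² − a²). -/
/-! With u = f² − a², the differential inequality says 2u ≤ (1 − t) u', which is exactly
the statement that (1 − t)² u(t) is nondecreasing on [0, 1). Comparing its values at 0 and t
gives the bound. -/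

open Set

theorem sq_sub_le_mul_mul_of_inv_mul_sub_div_le {s y y' b : ℝ} (hs : 0 < s) (hy : 0 < y)
    (h : 1 / s * (y - b / y) ≤ y') : y ^ 2 - b ≤ s * y * y' := by
  have hsy : 0 < s * y := mul_pos hs hy
  have hrw : 1 / s * (y - b / y) = (y ^ 2 - b) / (s * y) := by field_simp
  rw [hrw, div_le_iff₀ hsy] at h
  linarith

theorem hasDerivAt_sub_sq_mul {u : ℝ → ℝ} {u' T t : ℝ} (hu : HasDerivAt u u' t) :
    HasDerivAt (fun t => (T - t) ^ 2 * u t) ((T - t) * ((T - t) * u' - 2 * u t)) t := by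
  have hsq : HasDerivAt (fun t => (T - t) ^ 2) (2 * (T - t) * -1) t := by
    simpa using ((hasDerivAt_id t).const_sub T).fun_pow 2
  exact (hsq.fun_mul hu).congr_deriv (by ring)

theorem monotoneOn_sub_sq_mul {u u' : ℝ → ℝ} {D : Set ℝ} {T : ℝ} (hD : Convex ℝ D)
    (hDT : D ⊆ Iic T) (hu : ∀ t ∈ D, HasDerivAt u (u' t) t)
    (hcomp : ∀ t ∈ D, 2 * u t ≤ (T - t) * u' t) :
    MonotoneOn (fun t => (T - t) ^ 2 * u t) D := by
  have hderiv t (ht : t ∈ D) := hasDerivAt_sub_sq_mul (T := T) (hu t ht)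
  refine monotoneOn_of_hasDerivWithinAt_nonneg hD
    (fun t ht => (hderiv t ht).continuousAt.continuousWithinAt)
    (fun t ht => (hderiv t (interior_subset ht)).hasDerivWithinAt) fun t ht => ?_
  have ht : t ∈ D := interior_subset ht
  exact mul_nonneg (sub_nonneg.mpr (hDT ht)) (sub_nonneg.mpr (hcomp t ht))

theorem stmt_0_general (a : ℝ) (f f' : ℝ → ℝ)
    (hderiv : ∀ t ∈ Ico (0:ℝ) 1, HasDerivAt f (f' t) t)
    (hpos : ∀ t ∈ Ico (0:ℝ) 1, 0 < f t)
    (hineq : ∀ t ∈ Ico (0:ℝ) 1, f' t ≥ (1 / (1 - t)) * (f t - a ^ 2 / f t)) :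
    ∀ t ∈ Ico (0:ℝ) 1, f t ^ 2 - a ^ 2 ≥ ((1 - t)⁻¹) ^ 2 * (f 0 ^ 2 - a ^ 2) := by
  have hmono : MonotoneOn (fun t => (1 - t) ^ 2 * (f t ^ 2 - a ^ 2)) (Ico 0 1) := by
    refine monotoneOn_sub_sq_mul (u' := fun t => 2 * f t * f' t) (convex_Ico 0 1)
      (fun t ht => ht.2.le)
      (fun t ht => (((hderiv t ht).fun_pow 2).sub_const (a ^ 2)).congr_deriv (by ring))
      fun t ht => ?_
    have hcomp := sq_sub_le_mul_mul_of_inv_mul_sub_div_le (sub_pos.mpr ht.2) (hpos t ht)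
      (hineq t ht)
    linarith
  intro t ht
  have hmon := hmono (left_mem_Ico.mpr one_pos) ht ht.1
  simp only [sub_zero, one_pow, one_mul] at hmon
  rw [ge_iff_le, inv_pow, inv_mul_le_iff₀ (pow_pos (sub_pos.mpr ht.2) 2)]
  exact hmon

theorem stmt_0 (a : ℝ) (ha : 0 ≤ a) (f f' : ℝ → ℝ)
    (hderiv : ∀ t ∈ Ico (0:ℝ) 1, HasDerivAt f (f' t) t)
    (hpos : ∀ t ∈ Ico (0:ℝ) 1, 0 < f t)
    (hineq : ∀ t ∈ Ico (0:ℝ) 1, f' t ≥ (1 / (1 - t)) * (f t - a ^ 2 / f t))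
    (hf0 : f 0 ≥ a) :
    ∀ t ∈ Ico (0:ℝ) 1, f t ^ 2 - a ^ 2 ≥ ((1 - t)⁻¹) ^ 2 * (f 0 ^ 2 - a ^ 2) :=
  stmt_0_general a f f' hderiv hpos hineq
end

section
/- Let a > 0, ε ∈ (0,1), and let f : [0,1) → ℝ be a differentiable positive function with f'(t) ≥ (1/(1−t))·(f(t) − a²/f(t)) and f(0) ≥ a/√(1−ε²). Then f(t) ≥ ε·f(0)/(1−t) for all t ∈ [0,1). -/
/-! Multiplying the differential inequality by `2 (1 - t) f(t)` shows that
`(1 - t)² (f(t)² - a²)` is nondecreasing, so `(1 - t)² f(t)² ≥ f(0)² - a² ≥ ε² f(0)²`,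
the last step being the hypothesis on `f(0)` squared. -/

open Set

section Comparison

variable {f f' : ℝ → ℝ} {c : ℝ}

theorem hasDerivAt_one_sub_sq_mul_sq_sub {x : ℝ} (hf : HasDerivAt f (f' x) x) :
    HasDerivAt (fun t => (1 - t) ^ 2 * (f t ^ 2 - c))
      (2 * (1 - x) * ((1 - x) * f x * f' x - (f x ^ 2 - c))) x := by
  have hsq : HasDerivAt (fun t : ℝ => (1 - t) ^ 2) (2 * (1 - x) * (-1)) x := by
    simpa using ((hasDerivAt_id x).const_sub 1).fun_pow 2
  exact (hsq.fun_mul ((hf.fun_pow 2).sub_const c)).congr_deriv (by norm_num; ring)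

theorem sq_sub_le_mul_deriv_of_ge {x f'x : ℝ} (hx : x < 1) (hfx : 0 < f x)
    (h : f'x ≥ 1 / (1 - x) * (f x - c / f x)) :
    f x ^ 2 - c ≤ (1 - x) * f x * f'x := by
  have hrw : (1 - x) * f x * (1 / (1 - x) * (f x - c / f x)) = f x ^ 2 - c := by
    field_simp [(sub_pos.2 hx).ne']
  rw [← hrw]
  exact mul_le_mul_of_nonneg_left h (mul_pos (sub_pos.2 hx) hfx).le

theorem monotoneOn_one_sub_sq_mul_sq_sub
    (hderiv : ∀ t ∈ Ico (0:ℝ) 1, HasDerivAt f (f' t) t)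
    (hpos : ∀ t ∈ Ico (0:ℝ) 1, 0 < f t)
    (hineq : ∀ t ∈ Ico (0:ℝ) 1, f' t ≥ 1 / (1 - t) * (f t - c / f t)) :
    MonotoneOn (fun t => (1 - t) ^ 2 * (f t ^ 2 - c)) (Ico 0 1) := by
  have hG := fun t ht => hasDerivAt_one_sub_sq_mul_sq_sub (c := c) (hderiv t ht)
  refine monotoneOn_of_deriv_nonneg (convex_Ico 0 1)
    (fun t ht => (hG t ht).continuousAt.continuousWithinAt)
    (fun t ht => (hG t (interior_subset ht)).differentiableAt.differentiableWithinAt)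
    fun t ht => ?_
  have ht' := interior_subset ht
  rw [(hG t ht').deriv]
  have := sq_sub_le_mul_deriv_of_ge ht'.2 (hpos t ht') (hineq t ht')
  exact mul_nonneg (by linarith [ht'.2]) (sub_nonneg.2 this)

end Comparison

theorem sq_le_one_sub_sq_mul_sq {a ε b : ℝ} (ha : 0 < a) (hε : ε ∈ Ioo (0:ℝ) 1)
    (hb : b ≥ a / Real.sqrt (1 - ε ^ 2)) :
    a ^ 2 ≤ (1 - ε ^ 2) * b ^ 2 := by
  have hs : 0 < 1 - ε ^ 2 := by nlinarith [hε.1, hε.2]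
  have hab : a ≤ b * Real.sqrt (1 - ε ^ 2) := by
    rwa [ge_iff_le, div_le_iff₀ (Real.sqrt_pos.2 hs)] at hb
  calc a ^ 2 ≤ (b * Real.sqrt (1 - ε ^ 2)) ^ 2 := pow_le_pow_left₀ ha.le hab 2
    _ = (1 - ε ^ 2) * b ^ 2 := by rw [mul_pow, Real.sq_sqrt hs.le, mul_comm]

theorem stmt_1 (a ε : ℝ) (ha : 0 < a) (hε : ε ∈ Ioo (0:ℝ) 1) (f f' : ℝ → ℝ)
    (hderiv : ∀ t ∈ Ico (0:ℝ) 1, HasDerivAt f (f' t) t)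
    (hpos : ∀ t ∈ Ico (0:ℝ) 1, 0 < f t)
    (hineq : ∀ t ∈ Ico (0:ℝ) 1, f' t ≥ (1 / (1 - t)) * (f t - a ^ 2 / f t))
    (hf0 : f 0 ≥ a / Real.sqrt (1 - ε ^ 2)) :
    ∀ t ∈ Ico (0:ℝ) 1, f t ≥ ε * f 0 / (1 - t) := by
  intro t ht
  have h0 : (0:ℝ) ∈ Ico 0 1 := ⟨le_rfl, one_pos⟩
  have hmono : (1 - 0) ^ 2 * (f 0 ^ 2 - a ^ 2) ≤ (1 - t) ^ 2 * (f t ^ 2 - a ^ 2) :=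
    monotoneOn_one_sub_sq_mul_sq_sub hderiv hpos hineq h0 ht ht.1
  have hf0sq := sq_le_one_sub_sq_mul_sq ha hε hf0
  have hsq : (ε * f 0) ^ 2 ≤ ((1 - t) * f t) ^ 2 := by nlinarith [sq_nonneg (1 - t)]
  have hlin : ε * f 0 ≤ (1 - t) * f t :=
    (pow_le_pow_iff_left₀ (mul_pos hε.1 (hpos 0 h0)).le
      (mul_pos (sub_pos.2 ht.2) (hpos t ht)).le two_ne_zero).1 hsq
  rw [ge_iff_le, div_le_iff₀ (sub_pos.2 ht.2)]
  linarith
end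

section
/- Let a > 0, ε ∈ (0,1), and let f : [0,1) → ℝ be differentiable and positive with f'(t) ≥ (1/(1−t))(f(t) − a²/f(t)), f'(t) ≤ f(t)/(1−t), and f(0) ≥ a/√(1−ε²). Then for all t ∈ [0,1), ε·f(0) ≤ (1−t)·f(t) ≤ f(0). -/
/-!
Put `h t = (1 - t) f t`. The upper differential inequality says `h' ≤ 0`, so `h` decreases from
`h 0 = f 0`. The lower one says `h h' ≥ -a² (1 - t)`, i.e. `h² - a² (1 - t)²` increases; at `t = 0`
it equals `f 0² - a² ≥ ε² f 0²` by the assumption on `f 0`, hence `h t ≥ ε f 0`.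
-/

open Set

section Monotonicity

variable {g g' : ℝ → ℝ} {b c : ℝ}

lemma monotoneOn_Ico_of_hasDerivAt_nonneg (hg : ∀ t ∈ Ico b c, HasDerivAt g (g' t) t)
    (hg' : ∀ t ∈ Ioo b c, 0 ≤ g' t) : MonotoneOn g (Ico b c) :=
  monotoneOn_of_hasDerivWithinAt_nonneg (convex_Ico b c)
    (fun t ht => (hg t ht).continuousAt.continuousWithinAt)
    (fun t ht => (hg t (Ioo_subset_Ico_self (by rwa [interior_Ico] at ht))).hasDerivWithinAt)
    (fun t ht => hg' t (by rwa [interior_Ico] at ht))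

lemma antitoneOn_Ico_of_hasDerivAt_nonpos (hg : ∀ t ∈ Ico b c, HasDerivAt g (g' t) t)
    (hg' : ∀ t ∈ Ioo b c, g' t ≤ 0) : AntitoneOn g (Ico b c) :=
  antitoneOn_of_hasDerivWithinAt_nonpos (convex_Ico b c)
    (fun t ht => (hg t ht).continuousAt.continuousWithinAt)
    (fun t ht => (hg t (Ioo_subset_Ico_self (by rwa [interior_Ico] at ht))).hasDerivWithinAt)
    (fun t ht => hg' t (by rwa [interior_Ico] at ht))

end Monotonicity

section DifferentialInequalities

variable {f f' : ℝ → ℝ}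

lemma hasDerivAt_one_sub_mul {t : ℝ} (hf : HasDerivAt f (f' t) t) :
    HasDerivAt (fun s => (1 - s) * f s) ((1 - t) * f' t - f t) t := by
  refine (((hasDerivAt_id' t).const_sub 1).mul hf).congr_deriv ?_
  ring

lemma antitoneOn_one_sub_mul (hderiv : ∀ t ∈ Ico (0:ℝ) 1, HasDerivAt f (f' t) t)
    (hup : ∀ t ∈ Ico (0:ℝ) 1, f' t ≤ f t / (1 - t)) :
    AntitoneOn (fun t => (1 - t) * f t) (Ico 0 1) := by
  refine antitoneOn_Ico_of_hasDerivAt_nonpos (fun t ht => hasDerivAt_one_sub_mul (hderiv t ht))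
    fun t ht => ?_
  have ht' : t ∈ Ico (0:ℝ) 1 := Ioo_subset_Ico_self ht
  have h1t : 0 < 1 - t := sub_pos.2 ht.2
  have := (le_div_iff₀ h1t).1 (hup t ht')
  linarith

lemma mul_sub_add_sq_nonneg_of_le {a x y s : ℝ} (hx : 0 < x) (hs : 0 < s)
    (h : 1 / s * (x - a ^ 2 / x) ≤ y) : 0 ≤ x * (s * y - x) + a ^ 2 := by
  rw [one_div, inv_mul_le_iff₀ hs] at h
  have hxa : x * (x - a ^ 2 / x) = x ^ 2 - a ^ 2 := by field_simp
  nlinarith [mul_le_mul_of_nonneg_left h hx.le]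

lemma monotoneOn_sq_one_sub_mul_sub (a : ℝ) (hderiv : ∀ t ∈ Ico (0:ℝ) 1, HasDerivAt f (f' t) t)
    (hpos : ∀ t ∈ Ico (0:ℝ) 1, 0 < f t)
    (hlow : ∀ t ∈ Ico (0:ℝ) 1, f' t ≥ (1 / (1 - t)) * (f t - a ^ 2 / f t)) :
    MonotoneOn (fun t => ((1 - t) * f t) ^ 2 - a ^ 2 * (1 - t) ^ 2) (Ico 0 1) := by
  refine monotoneOn_Ico_of_hasDerivAt_nonneg
    (g' := fun t => 2 * (1 - t) * (f t * ((1 - t) * f' t - f t) + a ^ 2))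
    (fun t ht => ?_) fun t ht => ?_
  · refine (((hasDerivAt_one_sub_mul (hderiv t ht)).pow 2).sub
      ((((hasDerivAt_id' t).const_sub 1).pow 2).const_mul (a ^ 2))).congr_deriv ?_
    ring
  · have ht' : t ∈ Ico (0:ℝ) 1 := Ioo_subset_Ico_self ht
    have h1t : 0 < 1 - t := sub_pos.2 ht.2
    have key := mul_sub_add_sq_nonneg_of_le (hpos t ht') h1t (hlow t ht')
    positivity

end DifferentialInequalities

lemma sq_mul_le_sq_sub_sq_of_div_sqrt_le {a ε c : ℝ} (ha : 0 ≤ a) (hε : ε ^ 2 < 1)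
    (h : a / Real.sqrt (1 - ε ^ 2) ≤ c) : (ε * c) ^ 2 ≤ c ^ 2 - a ^ 2 := by
  have hsq : 0 < 1 - ε ^ 2 := sub_pos.2 hε
  have hac : a ≤ c * Real.sqrt (1 - ε ^ 2) := (div_le_iff₀ (Real.sqrt_pos.2 hsq)).1 h
  have := pow_le_pow_left₀ ha hac 2
  rw [mul_pow, Real.sq_sqrt hsq.le] at this
  linarith

theorem stmt_4 (a ε : ℝ) (ha : 0 < a) (hε : ε ∈ Ioo (0:ℝ) 1) (f f' : ℝ → ℝ)
    (hderiv : ∀ t ∈ Ico (0:ℝ) 1, HasDerivAt f (f' t) t)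
    (hpos : ∀ t ∈ Ico (0:ℝ) 1, 0 < f t)
    (hlow : ∀ t ∈ Ico (0:ℝ) 1, f' t ≥ (1 / (1 - t)) * (f t - a ^ 2 / f t))
    (hup : ∀ t ∈ Ico (0:ℝ) 1, f' t ≤ f t / (1 - t))
    (hf0 : f 0 ≥ a / Real.sqrt (1 - ε ^ 2)) :
    ∀ t ∈ Ico (0:ℝ) 1, ε * f 0 ≤ (1 - t) * f t ∧ (1 - t) * f t ≤ f 0 := by
  intro t ht
  have h0 : (0:ℝ) ∈ Ico (0:ℝ) 1 := ⟨le_rfl, one_pos⟩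
  have hε2 : ε ^ 2 < 1 := by nlinarith [hε.1, hε.2]
  have hinit := sq_mul_le_sq_sub_sq_of_div_sqrt_le ha.le hε2 hf0
  have hmono := monotoneOn_sq_one_sub_mul_sub a hderiv hpos hlow h0 ht ht.1
  have hanti := antitoneOn_one_sub_mul hderiv hup h0 ht ht.1
  simp only [sub_zero, one_mul, one_pow, mul_one] at hmono hanti
  refine ⟨?_, hanti⟩
  have hft : 0 < (1 - t) * f t := mul_pos (sub_pos.2 ht.2) (hpos t ht)
  refine (pow_le_pow_iff_left₀ (mul_pos hε.1 (hpos 0 h0)).le hft.le two_ne_zero).1 ?_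
  linarith [mul_nonneg (sq_nonneg a) (sq_nonneg (1 - t))]
end

section
/- Let a ≥ 0 and f : [0,1) → ℝ be differentiable and positive with f(0) > a and f'(t) ≥ (1/(1−t))·(f(t) − a²/f(t)). Then f(t) → ∞ as t → 1⁻. -/
/-!
Multiplying the differential inequality by `2 (1 - t) f` shows that
`(1 - t)² (f(t)² - a²)` is nondecreasing on `[0, 1)`, hence at least its value `f(0)² - a²` at `0`.
Therefore `f(t) ≥ √(f(0)² - a²) / (1 - t)`, and the right-hand side tends to `∞` as `t → 1⁻`
because `f(0) > a ≥ 0`.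
-/

open Set Filter

open scoped Topology

lemma sq_sub_le_mul_of_le_inv_mul {s x y b : ℝ} (hs : 0 < s) (hx : 0 < x)
    (h : 1 / s * (x - b / x) ≤ y) : x ^ 2 - b ≤ s * x * y := by
  have hsy : x - b / x ≤ s * y := by rwa [one_div, inv_mul_le_iff₀ hs] at h
  calc x ^ 2 - b = x * (x - b / x) := by field_simp
    _ ≤ x * (s * y) := by gcongr
    _ = s * x * y := by ring

lemma tendsto_div_one_sub_nhdsLT_one {c : ℝ} (hc : 0 < c) :
    Tendsto (fun t : ℝ => c / (1 - t)) (𝓝[<] 1) atTop := by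
  have h : Tendsto (fun t : ℝ => 1 - t) (𝓝[<] 1) (𝓝[>] 0) := by
    refine tendsto_nhdsWithin_of_tendsto_nhds_of_eventually_within _ ?_ ?_
    · exact ((continuous_sub_left 1).tendsto' 1 0 (sub_self 1)).mono_left nhdsWithin_le_nhds
    · filter_upwards [self_mem_nhdsWithin] with t (ht : t < 1) using sub_pos.mpr ht
  exact (h.inv_tendsto_nhdsGT_zero.const_mul_atTop hc).congr fun t => (div_eq_mul_inv c _).symm

section Comparison

variable {a : ℝ} {f f' : ℝ → ℝ}

/-- A first integral of the equality case `f' = (f - a² / f) / (1 - t)`, which turns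
`(f² - a²)' = 2 (f² - a²) / (1 - t)` into `((1 - t)² (f² - a²))' = 0`. -/
def comparisonEnergy (a : ℝ) (f : ℝ → ℝ) (t : ℝ) : ℝ := (1 - t) ^ 2 * (f t ^ 2 - a ^ 2)

lemma hasDerivAt_comparisonEnergy {t : ℝ} (hf : HasDerivAt f (f' t) t) :
    HasDerivAt (comparisonEnergy a f)
      (2 * (1 - t) * ((1 - t) * f t * f' t - (f t ^ 2 - a ^ 2))) t := by
  have h1 := ((hasDerivAt_id' t).const_sub 1).fun_pow 2
  refine (h1.fun_mul ((hf.fun_pow 2).sub_const (a ^ 2))).congr_deriv ?_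
  push_cast
  ring

lemma monotoneOn_comparisonEnergy
    (hderiv : ∀ t ∈ Ico (0:ℝ) 1, HasDerivAt f (f' t) t)
    (hpos : ∀ t ∈ Ico (0:ℝ) 1, 0 < f t)
    (hineq : ∀ t ∈ Ico (0:ℝ) 1, f' t ≥ (1 / (1 - t)) * (f t - a ^ 2 / f t)) :
    MonotoneOn (comparisonEnergy a f) (Ico 0 1) := by
  have hE := fun t ht => hasDerivAt_comparisonEnergy (a := a) (hderiv t ht)
  refine monotoneOn_of_hasDerivWithinAt_nonneg (convex_Ico 0 1)
    (fun t ht => (hE t ht).continuousAt.continuousWithinAt)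
    (fun t ht => (hE t (interior_subset ht)).hasDerivWithinAt) fun t ht => ?_
  have ht' := interior_subset ht
  have h1t : 0 < 1 - t := sub_pos.mpr ht'.2
  have hsq := sq_sub_le_mul_of_le_inv_mul h1t (hpos t ht') (hineq t ht')
  have : 0 ≤ (1 - t) * f t * f' t - (f t ^ 2 - a ^ 2) := by linarith
  positivity

lemma sqrt_div_one_sub_le_of_comparison
    (hderiv : ∀ t ∈ Ico (0:ℝ) 1, HasDerivAt f (f' t) t)
    (hpos : ∀ t ∈ Ico (0:ℝ) 1, 0 < f t)
    (hineq : ∀ t ∈ Ico (0:ℝ) 1, f' t ≥ (1 / (1 - t)) * (f t - a ^ 2 / f t))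
    {t : ℝ} (ht : t ∈ Ico (0:ℝ) 1) :
    √(f 0 ^ 2 - a ^ 2) / (1 - t) ≤ f t := by
  have h1t : 0 < 1 - t := sub_pos.mpr ht.2
  have hE := monotoneOn_comparisonEnergy hderiv hpos hineq ⟨le_rfl, one_pos⟩ ht ht.1
  simp only [comparisonEnergy, sub_zero, one_pow, one_mul] at hE
  rw [div_le_iff₀ h1t, Real.sqrt_le_left]
  · nlinarith [mul_nonneg (sq_nonneg (1 - t)) (sq_nonneg a)]
  · exact mul_nonneg (hpos t ht).le h1t.le

end Comparison

theorem stmt_10 (a : ℝ) (ha : 0 ≤ a) (f f' : ℝ → ℝ)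
    (hderiv : ∀ t ∈ Ico (0:ℝ) 1, HasDerivAt f (f' t) t)
    (hpos : ∀ t ∈ Ico (0:ℝ) 1, 0 < f t)
    (hineq : ∀ t ∈ Ico (0:ℝ) 1, f' t ≥ (1 / (1 - t)) * (f t - a ^ 2 / f t))
    (hf0 : f 0 > a) :
    Tendsto f (nhdsWithin 1 (Iio 1)) atTop := by
  have hc : 0 < √(f 0 ^ 2 - a ^ 2) := Real.sqrt_pos.mpr (by nlinarith)
  refine tendsto_atTop_mono' _ ?_ (tendsto_div_one_sub_nhdsLT_one hc)
  filter_upwards [Ico_mem_nhdsLT (zero_lt_one' ℝ)] with t ht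
  exact sqrt_div_one_sub_le_of_comparison hderiv hpos hineq ht
end

section
/- Let a > 0 and suppose f : [0,1) → ℝ is differentiable, positive, satisfies f'(t) ≥ (1/(1−t))(f(t) − a²/f(t)) and f'(t)·(1−t) = f(t) − R(t) for some function R with 0 ≤ R(t) ≤ a²/f(t) (i.e. the scalar curvature bound R ≤ a²/f). Then the function h(t) = (1−t)f(t) satisfies h'(t) = −R(t), hence h is nonincreasing, and h(t) ≥ √(f(0)² − a²) for all t ∈ [0,1) when f(0) ≥ a; in particular lim_{t→1⁻} h(t) exists and is ≥ √(f(0)² − a²). -/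
/-! The product `h = (1 - t) f` has derivative `-R ≤ 0`, so it decreases. For the lower bound,
`R ≤ a² / f` says `h R ≤ a² (1 - t)`, which makes `h² - a² (1 - t)²` nondecreasing; comparing with
its value `f(0)² - a²` at `t = 0` gives `h² ≥ f(0)² - a²`. A decreasing function bounded below has
a left limit at `1`, which inherits the bound. -/

open Set Filter Topology

theorem Convex.monotoneOn_of_hasDerivAt_nonneg {D : Set ℝ} (hD : Convex ℝ D) {g g' : ℝ → ℝ}
    (hg : ∀ x ∈ D, HasDerivAt g (g' x) x) (hg' : ∀ x ∈ D, 0 ≤ g' x) : MonotoneOn g D :=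
  monotoneOn_of_hasDerivWithinAt_nonneg hD (fun x hx ↦ (hg x hx).continuousAt.continuousWithinAt)
    (fun x hx ↦ (hg x (interior_subset hx)).hasDerivWithinAt) fun x hx ↦ hg' x (interior_subset hx)

theorem Convex.antitoneOn_of_hasDerivAt_nonpos {D : Set ℝ} (hD : Convex ℝ D) {g g' : ℝ → ℝ}
    (hg : ∀ x ∈ D, HasDerivAt g (g' x) x) (hg' : ∀ x ∈ D, g' x ≤ 0) : AntitoneOn g D :=
  antitoneOn_of_hasDerivWithinAt_nonpos hD (fun x hx ↦ (hg x hx).continuousAt.continuousWithinAt)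
    (fun x hx ↦ (hg x (interior_subset hx)).hasDerivWithinAt) fun x hx ↦ hg' x (interior_subset hx)

theorem AntitoneOn.exists_tendsto_nhdsLT_ge {h : ℝ → ℝ} {a b c : ℝ} (hab : a < b)
    (hanti : AntitoneOn h (Ioo a b)) (hc : ∀ t ∈ Ioo a b, c ≤ h t) :
    ∃ L, Tendsto h (𝓝[<] b) (𝓝 L) ∧ c ≤ L := by
  have hbdd : BddBelow (h '' Ioo a b) := ⟨c, forall_mem_image.2 hc⟩
  have hlim := hanti.tendsto_nhdsWithin_Ioo_left (nonempty_Ioo.2 hab) hbdd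
  exact ⟨_, hlim, ge_of_tendsto hlim (eventually_of_mem (Ioo_mem_nhdsLT hab) hc)⟩

theorem HasDerivAt.one_sub_mul_of_mul_one_sub_eq {f : ℝ → ℝ} {f' r t : ℝ}
    (hf : HasDerivAt f f' t) (hr : f' * (1 - t) = f t - r) :
    HasDerivAt (fun s ↦ (1 - s) * f s) (-r) t :=
  (((hasDerivAt_id' t).const_sub 1).mul hf).congr_deriv (by linear_combination hr)

theorem monotoneOn_sq_sub_sq_of_hasDerivAt {D : Set ℝ} (hD : Convex ℝ D) {h r : ℝ → ℝ} {c : ℝ}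
    (hh : ∀ t ∈ D, HasDerivAt h (-r t) t) (hr : ∀ t ∈ D, h t * r t ≤ c ^ 2 * (1 - t)) :
    MonotoneOn (fun t ↦ h t ^ 2 - (c * (1 - t)) ^ 2) D := by
  refine hD.monotoneOn_of_hasDerivAt_nonneg (g' := fun t ↦ 2 * (c ^ 2 * (1 - t) - h t * r t))
    (fun t ht ↦ ?_) fun t ht ↦ by linarith [hr t ht]
  exact (((hh t ht).pow 2).sub ((((hasDerivAt_id' t).const_sub 1).const_mul c).pow 2)).congr_deriv
    (by ring)

theorem sqrt_sq_sub_sq_le_of_hasDerivAt {h r : ℝ → ℝ} {c : ℝ}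
    (hh : ∀ t ∈ Ico (0 : ℝ) 1, HasDerivAt h (-r t) t)
    (hr : ∀ t ∈ Ico (0 : ℝ) 1, h t * r t ≤ c ^ 2 * (1 - t))
    (hnonneg : ∀ t ∈ Ico (0 : ℝ) 1, 0 ≤ h t) {t : ℝ} (ht : t ∈ Ico (0 : ℝ) 1) :
    √(h 0 ^ 2 - c ^ 2) ≤ h t := by
  have hmono := monotoneOn_sq_sub_sq_of_hasDerivAt (convex_Ico 0 1) hh hr
    (left_mem_Ico.2 zero_lt_one) ht ht.1
  refine (Real.sqrt_le_left (hnonneg t ht)).2 ?_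
  simp only [sub_zero, mul_one] at hmono
  nlinarith [sq_nonneg (c * (1 - t))]

theorem stmt_13_general (a : ℝ) (f f' R : ℝ → ℝ)
    (hderiv : ∀ t ∈ Ico (0:ℝ) 1, HasDerivAt f (f' t) t)
    (hpos : ∀ t ∈ Ico (0:ℝ) 1, 0 < f t)
    (hR : ∀ t ∈ Ico (0:ℝ) 1, f' t * (1 - t) = f t - R t)
    (hRnonneg : ∀ t ∈ Ico (0:ℝ) 1, 0 ≤ R t)
    (hRbound : ∀ t ∈ Ico (0:ℝ) 1, R t ≤ a ^ 2 / f t) :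
    (∀ t ∈ Ico (0:ℝ) 1, HasDerivAt (fun s => (1 - s) * f s) (-R t) t) ∧
    AntitoneOn (fun t => (1 - t) * f t) (Ico (0:ℝ) 1) ∧
    (∀ t ∈ Ico (0:ℝ) 1, (1 - t) * f t ≥ Real.sqrt (f 0 ^ 2 - a ^ 2)) ∧
    ∃ L : ℝ, Tendsto (fun t => (1 - t) * f t) (nhdsWithin 1 (Iio 1)) (nhds L) ∧
      L ≥ Real.sqrt (f 0 ^ 2 - a ^ 2) := by
  have hderiv_h t (ht : t ∈ Ico (0:ℝ) 1) := (hderiv t ht).one_sub_mul_of_mul_one_sub_eq (hR t ht)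
  have hanti := (convex_Ico (0:ℝ) 1).antitoneOn_of_hasDerivAt_nonpos hderiv_h
    fun t ht ↦ neg_nonpos.2 (hRnonneg t ht)
  have hcurv : ∀ t ∈ Ico (0:ℝ) 1, (1 - t) * f t * R t ≤ a ^ 2 * (1 - t) := fun t ht ↦ by
    have hfR : R t * f t ≤ a ^ 2 := (le_div_iff₀ (hpos t ht)).1 (hRbound t ht)
    nlinarith [sub_nonneg.2 ht.2.le]
  have hlower t (ht : t ∈ Ico (0:ℝ) 1) : √(f 0 ^ 2 - a ^ 2) ≤ (1 - t) * f t := by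
    simpa using sqrt_sq_sub_sq_le_of_hasDerivAt hderiv_h hcurv
      (fun s hs ↦ mul_nonneg (sub_nonneg.2 hs.2.le) (hpos s hs).le) ht
  refine ⟨hderiv_h, hanti, hlower, ?_⟩
  exact (hanti.mono Ioo_subset_Ico_self).exists_tendsto_nhdsLT_ge zero_lt_one
    fun t ht ↦ hlower t (Ioo_subset_Ico_self ht)

theorem stmt_13 (a : ℝ) (ha : 0 < a) (f f' R : ℝ → ℝ)
    (hderiv : ∀ t ∈ Ico (0:ℝ) 1, HasDerivAt f (f' t) t)
    (hpos : ∀ t ∈ Ico (0:ℝ) 1, 0 < f t)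
    (hineq : ∀ t ∈ Ico (0:ℝ) 1, f' t ≥ (1 / (1 - t)) * (f t - a ^ 2 / f t))
    (hR : ∀ t ∈ Ico (0:ℝ) 1, f' t * (1 - t) = f t - R t)
    (hRnonneg : ∀ t ∈ Ico (0:ℝ) 1, 0 ≤ R t)
    (hRbound : ∀ t ∈ Ico (0:ℝ) 1, R t ≤ a ^ 2 / f t)
    (hf0 : f 0 ≥ a) :
    (∀ t ∈ Ico (0:ℝ) 1, HasDerivAt (fun s => (1 - s) * f s) (-R t) t) ∧
    AntitoneOn (fun t => (1 - t) * f t) (Ico (0:ℝ) 1) ∧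
    (∀ t ∈ Ico (0:ℝ) 1, (1 - t) * f t ≥ Real.sqrt (f 0 ^ 2 - a ^ 2)) ∧
    ∃ L : ℝ, Tendsto (fun t => (1 - t) * f t) (nhdsWithin 1 (Iio 1)) (nhds L) ∧
      L ≥ Real.sqrt (f 0 ^ 2 - a ^ 2) :=
  stmt_13_general a f f' R hderiv hpos hR hRnonneg hRbound
end
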